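/- arXiv:1307.0657 — 2 statements merged into one kernel-verified Lean document; each statement's English description precedes it below -/
import Mathlib

section
/- Suppose F : ℝ₊₊² → ℝ satisfies |F(u+v, w) + F(u, v) - F(u+w, v) - F(u, w)| ≤ ε(u+v+w)^α for all u, v, w > 0. Define g(u) = F(u,1) - F(1,u) and G(u,v) = F(u,v) + g(v). Then |G(u,v) - G(v,u)| ≤ 3ε(u+v+1)^α for all u, v > 0. -/
/-!
The antisymmetric part of `G` is an exact signed sum of three values of the cocycle defect
`D(u, v, w) = F(u + v, w) + F(u, v) - F(u + w, v) - F(u, w)`, namely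
`G(u, v) - G(v, u) = D(1, u, v) - D(u, 1, v) + D(v, 1, u)`,
and each of them is bounded by `ε (u + v + 1) ^ α`.
-/

def cocycleDefect {M A : Type*} [Add M] [Sub A] [Add A] (F : M → M → A) (u v w : M) : A :=
  F (u + v) w + F u v - F (u + w) v - F u w

theorem antisymm_eq_cocycleDefect {M A : Type*} [AddCommMagma M] [AddCommGroup A]
    (F : M → M → A) (e u v : M) :
    (F u v + (F v e - F e v)) - (F v u + (F u e - F e u)) =
      cocycleDefect F e u v - cocycleDefect F u e v + cocycleDefect F v e u := by
  simp only [cocycleDefect, add_comm e, add_comm v u]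
  abel

theorem stmt_2_general (α ε : ℝ) (F : ℝ → ℝ → ℝ)
    (hF : ∀ u v w : ℝ, 0 < u → 0 < v → 0 < w →
      |F (u + v) w + F u v - F (u + w) v - F u w| ≤ ε * (u + v + w) ^ α)
    (g : ℝ → ℝ) (hg : ∀ u : ℝ, 0 < u → g u = F u 1 - F 1 u)
    (G : ℝ → ℝ → ℝ) (hG : ∀ u v : ℝ, 0 < u → 0 < v → G u v = F u v + g v) :
    ∀ u v : ℝ, 0 < u → 0 < v → |G u v - G v u| ≤ 3 * ε * (u + v + 1) ^ α := by
  intro u v hu hv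
  have h₁ : |cocycleDefect F 1 u v| ≤ ε * (u + v + 1) ^ α :=
    (hF 1 u v one_pos hu hv).trans_eq (by ring_nf)
  have h₂ : |cocycleDefect F u 1 v| ≤ ε * (u + v + 1) ^ α :=
    (hF u 1 v hu one_pos hv).trans_eq (by ring_nf)
  have h₃ : |cocycleDefect F v 1 u| ≤ ε * (u + v + 1) ^ α :=
    (hF v 1 u hv one_pos hu).trans_eq (by ring_nf)
  rw [hG u v hu hv, hG v u hv hu, hg u hu, hg v hv, antisymm_eq_cocycleDefect]
  calc |cocycleDefect F 1 u v - cocycleDefect F u 1 v + cocycleDefect F v 1 u|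
      ≤ |cocycleDefect F 1 u v| + |cocycleDefect F u 1 v| + |cocycleDefect F v 1 u| :=
        (abs_add_le _ _).trans (add_le_add_left (abs_sub _ _) _)
    _ ≤ 3 * ε * (u + v + 1) ^ α := by linarith

theorem stmt_2 (α ε : ℝ) (hε : 0 ≤ ε) (F : ℝ → ℝ → ℝ)
    (hF : ∀ u v w : ℝ, 0 < u → 0 < v → 0 < w →
      |F (u + v) w + F u v - F (u + w) v - F u w| ≤ ε * (u + v + w) ^ α)
    (g : ℝ → ℝ) (hg : ∀ u : ℝ, 0 < u → g u = F u 1 - F 1 u)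
    (G : ℝ → ℝ → ℝ) (hG : ∀ u v : ℝ, 0 < u → 0 < v → G u v = F u v + g v) :
    ∀ u v : ℝ, 0 < u → 0 < v → |G u v - G v u| ≤ 3 * ε * (u + v + 1) ^ α :=
  stmt_2_general α ε F hF g hg G hG
end

section
/- Let α ≠ 0 and a, b ∈ ℝ. The function h₁ : [0,1] → ℝ defined by h₁(0) = 0, h₁(x) = a x^α + b(1-x)^α - b for x ∈ (0,1), and h₁(1) = a - b satisfies h₁(x) + (1-x)^α h₁(y/(1-x)) = h₁(y) + (1-y)^α h₁(x/(1-y)) for all (x,y) ∈ D = {(x,y) : x, y ∈ [0,1), x+y ≤ 1}. -/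
/-!
Since `α ≠ 0`, `0 ^ α = 0`, so `h₁` agrees on all of `[0, 1]` with
`g t = a t^α + b (1 - t)^α - b`. Homogeneity of `t ↦ t^α` gives
`(1 - x)^α g (y / (1 - x)) = a y^α + b (1 - x - y)^α - b (1 - x)^α`, and adding `g x` yields
`a x^α + a y^α + b (1 - x - y)^α - b`, which is symmetric in `x` and `y`.
-/

open Real Set

noncomputable def mixedPower (α a b t : ℝ) : ℝ := a * t ^ α + b * (1 - t) ^ α - b

lemma rpow_mul_div_rpow (α : ℝ) {u v : ℝ} (hu : 0 ≤ u) (hv : 0 < v) :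
    v ^ α * (u / v) ^ α = u ^ α := by
  rw [← mul_rpow hv.le (div_nonneg hu hv.le), mul_div_cancel₀ _ hv.ne']

lemma one_sub_rpow_mul_mixedPower_div (α a b : ℝ) {x y : ℝ} (hx : x < 1) (hy : 0 ≤ y)
    (hxy : x + y ≤ 1) :
    (1 - x) ^ α * mixedPower α a b (y / (1 - x)) =
      a * y ^ α + b * (1 - x - y) ^ α - b * (1 - x) ^ α := by
  have hx' : 0 < 1 - x := by linarith
  have hsub : 1 - y / (1 - x) = (1 - x - y) / (1 - x) := by field_simp
  have hu := rpow_mul_div_rpow α hy hx'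
  have hw := rpow_mul_div_rpow α (by linarith : 0 ≤ 1 - x - y) hx'
  rw [mixedPower, hsub]
  linear_combination a * hu + b * hw

lemma mixedPower_add_one_sub_rpow_mul_comm (α a b : ℝ) {x y : ℝ} (hx0 : 0 ≤ x) (hx : x < 1)
    (hy0 : 0 ≤ y) (hy : y < 1) (hxy : x + y ≤ 1) :
    mixedPower α a b x + (1 - x) ^ α * mixedPower α a b (y / (1 - x)) =
      mixedPower α a b y + (1 - y) ^ α * mixedPower α a b (x / (1 - y)) := by
  rw [one_sub_rpow_mul_mixedPower_div α a b hx hy0 hxy,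
    one_sub_rpow_mul_mixedPower_div α a b hy hx0 (by linarith), mixedPower, mixedPower,
    sub_right_comm 1 y x]
  ring

lemma eq_mixedPower_of_mem_Icc {α a b : ℝ} (hα : α ≠ 0) {f : ℝ → ℝ} (h0 : f 0 = 0)
    (h1 : f 1 = a - b) (hmid : ∀ t ∈ Ioo (0 : ℝ) 1, f t = mixedPower α a b t) :
    ∀ t ∈ Icc (0 : ℝ) 1, f t = mixedPower α a b t := by
  rintro t ⟨ht0, ht1⟩
  rcases ht0.eq_or_lt with rfl | ht0
  · simp [mixedPower, h0, zero_rpow hα]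
  rcases ht1.eq_or_lt with rfl | ht1
  · simp [mixedPower, h1, zero_rpow hα]
  exact hmid t ⟨ht0, ht1⟩

lemma div_one_sub_mem_Icc {x y : ℝ} (hx : x < 1) (hy : 0 ≤ y) (hxy : x + y ≤ 1) :
    y / (1 - x) ∈ Icc (0 : ℝ) 1 :=
  ⟨div_nonneg hy (by linarith), div_le_one_of_le₀ (by linarith) (by linarith)⟩

theorem stmt_16 (α : ℝ) (hα : α ≠ 0) (a b : ℝ) (h₁ : ℝ → ℝ)
    (h0 : h₁ 0 = 0) (h1 : h₁ 1 = a - b)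
    (hmid : ∀ x : ℝ, x ∈ Set.Ioo (0 : ℝ) 1 → h₁ x = a * x ^ α + b * (1 - x) ^ α - b) :
    ∀ x y : ℝ, 0 ≤ x → x < 1 → 0 ≤ y → y < 1 → x + y ≤ 1 →
      h₁ x + (1 - x) ^ α * h₁ (y / (1 - x)) =
        h₁ y + (1 - y) ^ α * h₁ (x / (1 - y)) := by
  intro x y hx0 hx hy0 hy hxy
  have hg := eq_mixedPower_of_mem_Icc hα h0 h1 hmid
  rw [hg x ⟨hx0, hx.le⟩, hg y ⟨hy0, hy.le⟩, hg _ (div_one_sub_mem_Icc hx hy0 hxy),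
    hg _ (div_one_sub_mem_Icc hy hx0 (by linarith))]
  exact mixedPower_add_one_sub_rpow_mul_comm α a b hx0 hx hy0 hy hxy
end
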